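/- A compactification K is homeomorphic to the Higson compactification of some finitary coarse space if and only if K is ℝ-soft. -/

import Mathlib

open Set Filter Topology

universe u u₁ u₂ v w

section CoarsePreamble

variable {X : Type u}

/-- An entourage on `X` is a subset of `X × X` containing the diagonal. -/
def IsEntourage (E : Set (X × X)) : Prop := ∀ x : X, (x, x) ∈ E

/-- Composition `E ∘ F` of two entourages. -/
def entComp (E F : Set (X × X)) : Set (X × X) :=
  {p | ∃ y : X, (p.1, y) ∈ E ∧ (y, p.2) ∈ F}

/-- Inverse `E⁻¹` of an entourage. -/
def entInv (E : Set (X × X)) : Set (X × X) := {p | (p.2, p.1) ∈ E}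

/-- The `E`-ball `E[x]` centered at `x`. -/
def entBall (E : Set (X × X)) (x : X) : Set X := {y | (x, y) ∈ E}

/-- A coarse structure on `X`: a family of entourages covering `X × X`, closed under
`E ∘ F⁻¹` up to enlargement, and downward closed among entourages. -/
structure IsCoarseStructure (𝓔 : Set (Set (X × X))) : Prop where
  ent : ∀ E ∈ 𝓔, IsEntourage E
  cover : ∀ p : X × X, ∃ E ∈ 𝓔, p ∈ E
  comp_subset : ∀ E ∈ 𝓔, ∀ F ∈ 𝓔, ∃ G ∈ 𝓔, entComp E (entInv F) ⊆ G
  downward : ∀ E F : Set (X × X), IsEntourage E → E ⊆ F → F ∈ 𝓔 → E ∈ 𝓔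

/-- A set `B` is bounded in the coarse space `(X, 𝓔)` if `B ⊆ E[x]` for some `E ∈ 𝓔`, `x ∈ X`. -/
def IsBoundedSet (𝓔 : Set (Set (X × X))) (B : Set X) : Prop :=
  ∃ E ∈ 𝓔, ∃ x : X, B ⊆ entBall E x

/-- A coarse structure is finitary if the cardinalities of balls of each entourage
are uniformly finite. -/
def IsFinitaryCoarse (𝓔 : Set (Set (X × X))) : Prop :=
  ∀ E ∈ 𝓔, ∃ n : ℕ, ∀ x : X, (entBall E x).Finite ∧ (entBall E x).ncard ≤ n

/-- `d : X → X → ℝ` is a metric. -/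
structure IsMetricOn (d : X → X → ℝ) : Prop where
  refl : ∀ x, d x x = 0
  eq_of : ∀ x y, d x y = 0 → x = y
  symm : ∀ x y, d x y = d y x
  triangle : ∀ x y z, d x z ≤ d x y + d y z

/-- A coarse structure is metrizable if it is the coarse structure of some metric on `X`,
i.e. consists of all entourages of uniformly bounded `d`-diameter. -/
def IsMetrizableCoarse (𝓔 : Set (Set (X × X))) : Prop :=
  ∃ d : X → X → ℝ, IsMetricOn d ∧
    𝓔 = {E | IsEntourage E ∧ ∃ n : ℕ, ∀ p ∈ E, d p.1 p.2 ≤ (n : ℝ)}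

/-- A cellular entourage: a symmetric and transitive entourage (an equivalence relation). -/
def IsCellularEnt (E : Set (X × X)) : Prop :=
  (∀ p : X × X, p ∈ E → (p.2, p.1) ∈ E) ∧
    ∀ x y z : X, (x, y) ∈ E → (y, z) ∈ E → (x, z) ∈ E

/-- `𝓑` is a base of the coarse structure `𝓔`. -/
def IsCoarseBase (𝓔 𝓑 : Set (Set (X × X))) : Prop :=
  𝓑 ⊆ 𝓔 ∧ ∀ E ∈ 𝓔, ∃ B ∈ 𝓑, E ⊆ B

/-- A coarse structure is cellular if it has a base of cellular entourages. -/
def IsCellularCoarse (𝓔 : Set (Set (X × X))) : Prop :=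
  ∃ 𝓑 : Set (Set (X × X)), IsCoarseBase 𝓔 𝓑 ∧ ∀ B ∈ 𝓑, IsCellularEnt B

/-- A subset `D` is `𝓔`-discrete (thin). -/
def IsCoarseDiscrete (𝓔 : Set (Set (X × X))) (D : Set X) : Prop :=
  ∀ E ∈ 𝓔, ∃ B : Set X, IsBoundedSet 𝓔 B ∧ ∀ x ∈ D \ B, D ∩ entBall E x = {x}

/-- The basic entourage `E_F` determined by a set `F` of permutations of `X`. -/
def permEnt (F : Set (Equiv.Perm X)) : Set (X × X) :=
  {p | p.2 = p.1 ∨ ∃ g ∈ F, p.2 = g p.1}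

/-- The coarse structure `𝓔_G` generated by a set (group) `S` of permutations of `X`:
all entourages contained in `E_F` for some finite `F ⊆ S`. -/
def permCoarse (S : Set (Equiv.Perm X)) : Set (Set (X × X)) :=
  {E | IsEntourage E ∧ ∃ F : Finset (Equiv.Perm X),
    (F : Set (Equiv.Perm X)) ⊆ S ∧ E ⊆ permEnt (F : Set (Equiv.Perm X))}

variable {M : Type v} [MetricSpace M]

/-- A function `φ : X → M` is slowly oscillating. -/
def SlowlyOscillating (𝓔 : Set (Set (X × X))) (φ : X → M) : Prop :=
  ∀ ε : ℝ, 0 < ε → ∀ E ∈ 𝓔, ∃ B : Set X, IsBoundedSet 𝓔 B ∧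
    ∀ x : X, x ∉ B → EMetric.diam (φ '' entBall E x) < ENNReal.ofReal ε

/-- Two sets are asymptotically separated if `E[A] ∩ E[B]` is bounded for every `E ∈ 𝓔`. -/
def AsymptoticallySeparated (𝓔 : Set (Set (X × X))) (A B : Set X) : Prop :=
  ∀ E ∈ 𝓔, IsBoundedSet 𝓔 ((⋃ a ∈ A, entBall E a) ∩ ⋃ b ∈ B, entBall E b)

/-- A coarse space `(X, 𝓔)` is `M`-normal. -/
def IsCoarseNormal (𝓔 : Set (Set (X × X))) (M : Type v) [MetricSpace M] : Prop :=
  ∀ A B : Set X, A.Nonempty → B.Nonempty → Disjoint A B →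
    AsymptoticallySeparated 𝓔 A B →
    ∃ φ : X → M, SlowlyOscillating 𝓔 φ ∧
      ∃ ε : ℝ, 0 < ε ∧ ∀ a ∈ A, ∀ b ∈ B, ε ≤ dist (φ a) (φ b)

/-- `so(X,𝓔;M)`: the bounded slowly oscillating functions `X → M`. -/
def soSet (𝓔 : Set (Set (X × X))) (M : Type v) [MetricSpace M] : Set (X → M) :=
  {φ | Bornology.IsBounded (Set.range φ) ∧ SlowlyOscillating 𝓔 φ}

/-- The canonical map `δ_M : X → M^{so(X,𝓔;M)}`. -/
def deltaMap (𝓔 : Set (Set (X × X))) (M : Type v) [MetricSpace M] :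
    X → (↥(soSet 𝓔 M) → M) := fun x f => f.1 x

/-- The underlying set of the `M`-compactification: the closure of `δ_M(X)`. -/
def hCompSet (𝓔 : Set (Set (X × X))) (M : Type v) [MetricSpace M] :
    Set (↥(soSet 𝓔 M) → M) := closure (Set.range (deltaMap 𝓔 M))

/-- The `M`-compactification `h_M(X,𝓔)` of the coarse space `(X,𝓔)`. -/
abbrev HComp (𝓔 : Set (Set (X × X))) (M : Type v) [MetricSpace M] :=
  ↥(hCompSet 𝓔 M)

/-- The copy of a point `x ∈ X` inside the `M`-compactification. -/
def deltaEmb (𝓔 : Set (Set (X × X))) (M : Type v) [MetricSpace M] (x : X) :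
    HComp 𝓔 M := ⟨deltaMap 𝓔 M x, subset_closure (Set.mem_range_self x)⟩

/-- The permutation group `G_{X, h_M(X,𝓔)}` of the `M`-compactification, as a set of
permutations of `X` (`X` being identified with the set of isolated points of `h_M(X,𝓔)`
via `δ_M`): those permutations induced by homeomorphisms of `h_M(X,𝓔)` fixing all
points outside (the image of) `X`. -/
def hPermGroup (𝓔 : Set (Set (X × X))) (M : Type v) [MetricSpace M] :
    Set (Equiv.Perm X) :=
  {σ | ∃ h : HComp 𝓔 M ≃ₜ HComp 𝓔 M,
    (∀ z : HComp 𝓔 M, z ∉ Set.range (deltaEmb 𝓔 M) → h z = z) ∧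
    ∀ x : X, h (deltaEmb 𝓔 M x) = deltaEmb 𝓔 M (σ x)}

end CoarsePreamble

section TopPreamble

/-- The set of isolated points of a topological space. -/
def isolatedPoints (K : Type w) [TopologicalSpace K] : Set K :=
  {x | IsOpen ({x} : Set K)}

/-- A compactification: a compact Hausdorff space with dense set of isolated points. -/
def IsCompactification (K : Type w) [TopologicalSpace K] : Prop :=
  CompactSpace K ∧ T2Space K ∧ Dense (isolatedPoints K)

/-- The permutation group `G_{K',K}` of a compactification `K`: permutations of the
set `K'` of isolated points induced by homeomorphisms of `K` fixing `K \ K'` pointwise. -/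
def homeoPerms (K : Type w) [TopologicalSpace K] :
    Set (Equiv.Perm ↥(isolatedPoints K)) :=
  {σ | ∃ h : K ≃ₜ K, (∀ z : K, z ∉ isolatedPoints K → h z = z) ∧
    ∀ x : ↥(isolatedPoints K), h x.val = (σ x).val}

/-- The oscillation of `φ : K' → M` at a point `z ∈ K`. -/
noncomputable def oscAt {K : Type w} [TopologicalSpace K] {M : Type v} [MetricSpace M]
    (φ : ↥(isolatedPoints K) → M) (z : K) : ENNReal :=
  ⨅ (O : Set K) (_ : IsOpen O) (_ : z ∈ O),
    EMetric.diam (φ '' (Subtype.val ⁻¹' O))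

/-- A compactification `K` is `M`-soft. -/
def IsMSoft (K : Type w) [TopologicalSpace K] (M : Type v) [MetricSpace M] : Prop :=
  ∀ φ : ↥(isolatedPoints K) → M, Bornology.IsBounded (Set.range φ) →
    (∃ z : K, 0 < oscAt φ z) →
    ∃ σ ∈ homeoPerms K, ∃ ε : ℝ, 0 < ε ∧
      {x : ↥(isolatedPoints K) | ε ≤ dist (φ (σ x)) (φ x)}.Infinite

/-- A compactification `K` is soft. -/
def IsSoft (K : Type w) [TopologicalSpace K] : Prop :=
  ∀ A B : Set ↥(isolatedPoints K), Disjoint A B →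
    (closure (Subtype.val '' A) ∩ closure (Subtype.val '' B)).Nonempty →
    ∃ σ ∈ homeoPerms K, {x : ↥(isolatedPoints K) | x ∈ A ∧ σ x ∈ B}.Infinite

/-- `uc(K',K;M)`: restrictions to the set of isolated points of continuous functions `K → M`. -/
def ucSet (K : Type w) [TopologicalSpace K] (M : Type v) [MetricSpace M] :
    Set (↥(isolatedPoints K) → M) :=
  {φ | ∃ f : K → M, Continuous f ∧ ∀ x : ↥(isolatedPoints K), f x.val = φ x}

/-- `uc(X, h_M(X,𝓔); M)`: restrictions to `X` (via `δ_M`) of continuous functions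
`h_M(X,𝓔) → M`. -/
def ucHComp {X : Type u} (𝓔 : Set (Set (X × X))) (M : Type v) [MetricSpace M] :
    Set (X → M) :=
  {φ | ∃ f : HComp 𝓔 M → M, Continuous f ∧ ∀ x : X, f (deltaEmb 𝓔 M x) = φ x}

/-- The cardinal `Δ`: the smallest cardinality of a base of a cellular finitary coarse
structure on `ω` containing no infinite discrete subsets. -/
noncomputable def smallDeltaCard : Cardinal.{0} :=
  sInf {c : Cardinal.{0} | ∃ 𝓔 : Set (Set (ℕ × ℕ)), IsCoarseStructure 𝓔 ∧
    IsCellularCoarse 𝓔 ∧ IsFinitaryCoarse 𝓔 ∧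
    (∀ D : Set ℕ, IsCoarseDiscrete 𝓔 D → D.Finite) ∧
    ∃ 𝓑 : Set (Set (ℕ × ℕ)), IsCoarseBase 𝓔 𝓑 ∧ Cardinal.mk ↥𝓑 = c}

/-- The cardinal `𝔭`. -/
noncomputable def pCard : Cardinal.{0} :=
  sInf {c : Cardinal.{0} | ∃ F : Set (Set ℕ), (∀ A ∈ F, A.Infinite) ∧
    (∀ S : Finset (Set ℕ), (S : Set (Set ℕ)) ⊆ F → (⋂ A ∈ S, A).Infinite) ∧
    (∀ I : Set ℕ, I.Infinite → ∃ A ∈ F, (I \ A).Infinite) ∧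
    Cardinal.mk ↥F = c}

/-- The character `χ(x;K)` of a point. -/
noncomputable def charAt (K : Type w) [TopologicalSpace K] (x : K) : Cardinal.{w} :=
  sInf {c : Cardinal.{w} | ∃ 𝓑 : Set (Set K), (∀ U ∈ 𝓑, IsOpen U ∧ x ∈ U) ∧
    (∀ V : Set K, IsOpen V → x ∈ V → ∃ U ∈ 𝓑, U ⊆ V) ∧ Cardinal.mk ↥𝓑 = c}

/-- The character `χ(K)` of a space. -/
noncomputable def spaceChar (K : Type w) [TopologicalSpace K] : Cardinal.{w} :=
  ⨆ x : K, charAt K x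

/-- A corona: a compact Hausdorff space homeomorphic to the remainder of a
compactification of the countable discrete space `ℕ`. -/
def IsCorona (K : Type w) [TopologicalSpace K] : Prop :=
  CompactSpace K ∧ T2Space K ∧
    ∃ (C : Type w) (_ : TopologicalSpace C), IsCompactification C ∧
      (isolatedPoints C).Infinite ∧ (isolatedPoints C).Countable ∧
      Nonempty (K ≃ₜ ↥((isolatedPoints C)ᶜ))

/-- A soft corona. -/
def IsSoftCorona (K : Type w) [TopologicalSpace K] : Prop :=
  CompactSpace K ∧ T2Space K ∧
    ∃ (C : Type w) (_ : TopologicalSpace C), IsCompactification C ∧ IsSoft C ∧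
      (isolatedPoints C).Infinite ∧ (isolatedPoints C).Countable ∧
      Nonempty (K ≃ₜ ↥((isolatedPoints C)ᶜ))

/-- An `M`-soft corona. -/
def IsMSoftCorona (K : Type w) [TopologicalSpace K] (M : Type v) [MetricSpace M] : Prop :=
  CompactSpace K ∧ T2Space K ∧
    ∃ (C : Type w) (_ : TopologicalSpace C), IsCompactification C ∧ IsMSoft C M ∧
      (isolatedPoints C).Infinite ∧ (isolatedPoints C).Countable ∧
      Nonempty (K ≃ₜ ↥((isolatedPoints C)ᶜ))

end TopPreamble

/-!
For a finitary coarse space `X`, the points of `X` are exactly the isolated points of `h_ℝ(X)`.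
Every slowly oscillating `f` extends continuously to `h_ℝ(X)` (as a coordinate), so a bounded
function on `X` with positive oscillation somewhere is not slowly oscillating: for some entourage
`E` and `ε > 0` there are infinitely many pairwise disjoint `E⁻¹E`-close pairs on which it jumps by
`ε`. The involution swapping these pairs is close to the identity, and precomposition with a
permutation `σ` close to the identity is a homeomorphism of `h_ℝ(X)` fixing the corona, because
`f ∘ σ - f` tends to `0` at infinity for every slowly oscillating `f`.

Conversely, give `K'` the finitary coarse structure generated by the group of permutations induced
by homeomorphisms of `K` fixing `K \ K'`. By compactness such a homeomorphism moves only finitely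
many isolated points by a lot, so restrictions of continuous functions are slowly oscillating; by
`ℝ`-softness every slowly oscillating function has zero oscillation everywhere, hence extends
continuously to `K`. The extensions then embed `K` onto `h_ℝ(K')`.
-/

open scoped Pointwise

namespace IsCoarseStructure

variable {X : Type*} {𝓔 : Set (Set (X × X))}

theorem inv_mem (h : IsCoarseStructure 𝓔) {E : Set (X × X)} (hE : E ∈ 𝓔) : entInv E ∈ 𝓔 := by
  obtain ⟨G, hG, hEG⟩ := h.comp_subset E hE E hE
  exact h.downward _ G (h.ent E hE) (fun p hp => hEG ⟨p.1, h.ent E hE p.1, hp⟩) hG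

theorem comp_mem (h : IsCoarseStructure 𝓔) {E F : Set (X × X)} (hE : E ∈ 𝓔) (hF : F ∈ 𝓔) :
    entComp E F ∈ 𝓔 := by
  obtain ⟨G, hG, hEG⟩ := h.comp_subset E hE (entInv F) (h.inv_mem hF)
  exact h.downward _ G (fun x => ⟨x, h.ent E hE x, h.ent F hF x⟩) hEG hG

theorem union_mem (h : IsCoarseStructure 𝓔) {E F : Set (X × X)} (hE : E ∈ 𝓔) (hF : F ∈ 𝓔) :
    E ∪ F ∈ 𝓔 := by
  refine h.downward _ _ (fun x => Or.inl (h.ent E hE x)) ?_ (h.comp_mem hE hF)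
  rintro ⟨x, y⟩ (hxy | hxy)
  exacts [⟨y, hxy, h.ent F hF y⟩, ⟨x, h.ent E hE x, hxy⟩]

theorem isBoundedSet_of_finite [Nonempty X] (h : IsCoarseStructure 𝓔) {B : Set X}
    (hB : B.Finite) : IsBoundedSet 𝓔 B := by
  obtain ⟨x₀⟩ := ‹Nonempty X›
  suffices ∃ E ∈ 𝓔, B ⊆ entBall E x₀ from
    let ⟨E, hE, hBE⟩ := this; ⟨E, hE, x₀, hBE⟩
  induction B, hB using Set.Finite.induction_on with
  | empty => obtain ⟨E, hE, -⟩ := h.cover (x₀, x₀); exact ⟨E, hE, empty_subset _⟩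
  | @insert b s _ _ ih =>
    obtain ⟨E, hE, hsE⟩ := ih
    obtain ⟨F, hF, hbF⟩ := h.cover (x₀, b)
    exact ⟨E ∪ F, h.union_mem hE hF, insert_subset (Or.inr hbF) fun y hy => Or.inl (hsE hy)⟩

end IsCoarseStructure

namespace IsFinitaryCoarse

variable {X : Type*} {𝓔 : Set (Set (X × X))}

theorem finite_entBall (hfin : IsFinitaryCoarse 𝓔) {E : Set (X × X)} (hE : E ∈ 𝓔) (x : X) :
    (entBall E x).Finite :=
  let ⟨_, hn⟩ := hfin E hE; (hn x).1

theorem finite_of_isBoundedSet (hfin : IsFinitaryCoarse 𝓔) {B : Set X}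
    (hB : IsBoundedSet 𝓔 B) : B.Finite :=
  let ⟨_, hE, x, hBE⟩ := hB; (hfin.finite_entBall hE x).subset hBE

end IsFinitaryCoarse

section SlowlyOscillating

variable {X : Type*} {𝓔 : Set (Set (X × X))} {M : Type*} [MetricSpace M]

theorem ediam_image_le_ofReal_iff {α : Type*} {f : α → M} {s : Set α} {ε : ℝ} (hε : 0 ≤ ε) :
    Metric.ediam (f '' s) ≤ ENNReal.ofReal ε ↔ ∀ x ∈ s, ∀ y ∈ s, dist (f x) (f y) ≤ ε := by
  simp [Metric.ediam_le_iff, edist_le_ofReal hε]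

theorem SlowlyOscillating.eventually_cofinite (hfin : IsFinitaryCoarse 𝓔) {φ : X → M}
    (hφ : SlowlyOscillating 𝓔 φ) {ε : ℝ} (hε : 0 < ε) {E : Set (X × X)} (hE : E ∈ 𝓔) :
    ∀ᶠ x in cofinite, ∀ y ∈ entBall E x, ∀ y' ∈ entBall E x, dist (φ y) (φ y') ≤ ε := by
  obtain ⟨B, hB, hdiam⟩ := hφ ε hε E hE
  filter_upwards [(hfin.finite_of_isBoundedSet hB).eventually_cofinite_notMem] with x hx
  exact (ediam_image_le_ofReal_iff hε.le).1 (hdiam x hx).le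

theorem slowlyOscillating_of_eventually_cofinite [Nonempty X] (h : IsCoarseStructure 𝓔)
    {φ : X → M} (hφ : ∀ ε > 0, ∀ E ∈ 𝓔, ∀ᶠ x in cofinite,
      ∀ y ∈ entBall E x, ∀ y' ∈ entBall E x, dist (φ y) (φ y') ≤ ε) :
    SlowlyOscillating 𝓔 φ := by
  intro ε hε E hE
  refine ⟨_, h.isBoundedSet_of_finite (eventually_cofinite.1 (hφ _ (half_pos hε) E hE)),
    fun x hx => ?_⟩
  calc Metric.ediam (φ '' entBall E x) ≤ ENNReal.ofReal (ε / 2) :=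
        (ediam_image_le_ofReal_iff (half_pos hε).le).2 (not_not.1 hx)
    _ < ENNReal.ofReal ε := (ENNReal.ofReal_lt_ofReal_iff hε).2 (half_lt_self hε)

def IsCloseToId (𝓔 : Set (Set (X × X))) (σ : Equiv.Perm X) : Prop :=
  ∃ G ∈ 𝓔, ∀ x, (x, σ x) ∈ G

namespace IsCloseToId

variable {σ : Equiv.Perm X}

theorem inv (h : IsCoarseStructure 𝓔) (hσ : IsCloseToId 𝓔 σ) : IsCloseToId 𝓔 σ⁻¹ := by
  obtain ⟨G, hG, hσG⟩ := hσ
  refine ⟨entInv G, h.inv_mem hG, fun x => ?_⟩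
  simpa [entInv] using hσG (σ⁻¹ x)

theorem comp_mem_soSet (h : IsCoarseStructure 𝓔) (hσ : IsCloseToId 𝓔 σ) {f : X → M}
    (hf : f ∈ soSet 𝓔 M) : f ∘ σ ∈ soSet 𝓔 M := by
  obtain ⟨G, hG, hσG⟩ := hσ
  refine ⟨hf.1.subset (range_comp_subset_range _ _), fun ε hε E hE => ?_⟩
  obtain ⟨B, hB, hdiam⟩ := hf.2 ε hε (entComp E G) (h.comp_mem hE hG)
  refine ⟨B, hB, fun x hx => (Metric.ediam_mono ?_).trans_lt (hdiam x hx)⟩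
  rintro _ ⟨y, hy, rfl⟩
  exact ⟨σ y, ⟨y, hy, hσG y⟩, rfl⟩

theorem tendsto_dist_cofinite (h : IsCoarseStructure 𝓔) (hfin : IsFinitaryCoarse 𝓔)
    (hσ : IsCloseToId 𝓔 σ) {f : X → M} (hf : SlowlyOscillating 𝓔 f) :
    Tendsto (fun x => dist (f (σ x)) (f x)) cofinite (𝓝 0) := by
  obtain ⟨G, hG, hσG⟩ := hσ
  refine Metric.tendsto_nhds.2 fun ε hε => ?_
  filter_upwards [hf.eventually_cofinite hfin (half_pos hε) hG] with x hx
  simpa using (hx _ (hσG x) _ (h.ent G hG x)).trans_lt (half_lt_self hε)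

end IsCloseToId

end SlowlyOscillating

section Higson

variable {X : Type*} {𝓔 : Set (Set (X × X))} {M : Type*} [MetricSpace M]

theorem update_mem_soSet [DecidableEq X] (h : IsCoarseStructure 𝓔) (hfin : IsFinitaryCoarse 𝓔)
    (x : X) (a b : M) : Function.update (fun _ => b) x a ∈ soSet 𝓔 M := by
  have : Nonempty X := ⟨x⟩
  refine ⟨(Set.toFinite {a, b}).isBounded.subset ?_,
    slowlyOscillating_of_eventually_cofinite h fun ε hε E hE => ?_⟩
  · rintro _ ⟨y, rfl⟩
    by_cases hy : y = x <;> simp [hy]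
  · filter_upwards [(hfin.finite_entBall (h.inv_mem hE) x).eventually_cofinite_notMem]
      with w hw y hy y' hy'
    have hne : ∀ v ∈ entBall E w, v ≠ x := by
      rintro v hv rfl
      exact hw hv
    simp [hne y hy, hne y' hy', hε.le]

theorem denseRange_deltaEmb : DenseRange (deltaEmb 𝓔 M) := by
  rw [DenseRange, dense_iff_closure_eq, IsInducing.subtypeVal.closure_eq_preimage_closure_image,
    ← range_comp]
  exact Subtype.coe_preimage_self _

theorem Dense.isolatedPoints_subset {K : Type*} [TopologicalSpace K] {s : Set K} (hs : Dense s) :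
    isolatedPoints K ⊆ s := fun p hp =>
  let ⟨_, hq, hqs⟩ := hs.inter_open_nonempty {p} hp (singleton_nonempty p)
  (mem_singleton_iff.1 hq) ▸ hqs

theorem isOpen_singleton_deltaEmb [Nontrivial M] (h : IsCoarseStructure 𝓔)
    (hfin : IsFinitaryCoarse 𝓔) (x : X) : IsOpen {deltaEmb 𝓔 M x} := by
  classical
  obtain ⟨a, b, hab⟩ := exists_pair_ne M
  let χ : soSet 𝓔 M := ⟨_, update_mem_soSet h hfin x a b⟩
  have hχ : ∀ y, deltaMap 𝓔 M y χ ≠ b ↔ y = x := fun y => by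
    by_cases hy : y = x <;> simp [deltaMap, χ, hy, hab]
  let U : Set (soSet 𝓔 M → M) := {q | q χ ≠ b}
  have hU : IsOpen U := isOpen_ne_fun (continuous_apply χ) continuous_const
  have hUδ : U ∩ range (deltaMap 𝓔 M) = {deltaMap 𝓔 M x} := by
    ext q
    constructor
    · rintro ⟨hq, y, rfl⟩
      rw [(hχ y).1 hq]
      rfl
    · rintro rfl
      exact ⟨(hχ x).2 rfl, x, rfl⟩
  refine isOpen_induced_iff.2 ⟨U, hU, ?_⟩
  ext q
  refine ⟨fun hq => Subtype.ext ?_, fun hq => ?_⟩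
  · have hq' := hU.inter_closure ⟨hq, q.2⟩
    rwa [hUδ, closure_singleton] at hq'
  · rw [mem_singleton_iff.1 hq]
    exact (hχ x).2 rfl

theorem isolatedPoints_hComp [Nontrivial M] (h : IsCoarseStructure 𝓔)
    (hfin : IsFinitaryCoarse 𝓔) : isolatedPoints (HComp 𝓔 M) = range (deltaEmb 𝓔 M) :=
  denseRange_deltaEmb.isolatedPoints_subset.antisymm
    (range_subset_iff.2 (isOpen_singleton_deltaEmb h hfin))

theorem deltaEmb_injective [Nontrivial M] (h : IsCoarseStructure 𝓔)
    (hfin : IsFinitaryCoarse 𝓔) : Function.Injective (deltaEmb 𝓔 M) := by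
  classical
  intro x y hxy
  obtain ⟨a, b, hab⟩ := exists_pair_ne M
  have := congrFun (congrArg Subtype.val hxy) ⟨_, update_mem_soSet h hfin x a b⟩
  by_contra hne
  simp [deltaEmb, deltaMap, Ne.symm hne, hab] at this

variable (M) in
noncomputable def isolatedPointsEquiv [Nontrivial M] (h : IsCoarseStructure 𝓔)
    (hfin : IsFinitaryCoarse 𝓔) :
    X ≃ isolatedPoints (HComp 𝓔 M) :=
  (Equiv.ofInjective _ (deltaEmb_injective h hfin)).trans
    (Equiv.setCongr (isolatedPoints_hComp h hfin).symm)

@[simp]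
theorem coe_isolatedPointsEquiv [Nontrivial M] (h : IsCoarseStructure 𝓔)
    (hfin : IsFinitaryCoarse 𝓔) (x : X) :
    (isolatedPointsEquiv M h hfin x : HComp 𝓔 M) = deltaEmb 𝓔 M x :=
  rfl

theorem clusterPt_deltaMap_cofinite {p : HComp 𝓔 M} (hp : p ∉ range (deltaEmb 𝓔 M)) :
    ClusterPt p.1 (map (deltaMap 𝓔 M) cofinite) := by
  refine clusterPt_iff_forall_mem_closure.2 fun s hs => ?_
  have hfar : (deltaMap 𝓔 M '' (deltaMap 𝓔 M ⁻¹' s)ᶜ).Finite :=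
    (mem_cofinite.1 (mem_map.1 hs)).image _
  have hcover : range (deltaMap 𝓔 M) ⊆ s ∪ deltaMap 𝓔 M '' (deltaMap 𝓔 M ⁻¹' s)ᶜ := by
    rintro _ ⟨x, rfl⟩
    by_cases hx : deltaMap 𝓔 M x ∈ s
    exacts [Or.inl hx, Or.inr ⟨x, hx, rfl⟩]
  have hp' := closure_mono hcover p.2
  rw [closure_union, hfar.isClosed.closure_eq] at hp'
  exact hp'.resolve_right fun ⟨x, _, hx⟩ => hp ⟨x, Subtype.ext hx⟩

namespace IsCloseToId

variable {σ : Equiv.Perm X}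

def soEquiv (h : IsCoarseStructure 𝓔) (hσ : IsCloseToId 𝓔 σ) : soSet 𝓔 M ≃ soSet 𝓔 M where
  toFun f := ⟨f.1 ∘ σ, hσ.comp_mem_soSet h f.2⟩
  invFun f := ⟨f.1 ∘ ⇑σ⁻¹, (hσ.inv h).comp_mem_soSet h f.2⟩
  left_inv f := Subtype.ext (funext fun x => by simp)
  right_inv f := Subtype.ext (funext fun x => by simp)

/-- Precomposition with `σ`, acting on `h_M(X, 𝓔)`. -/
def higsonHomeomorph (h : IsCoarseStructure 𝓔) (hσ : IsCloseToId 𝓔 σ) :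
    HComp 𝓔 M ≃ₜ HComp 𝓔 M :=
  let Ψ := (Homeomorph.piCongrLeft (Y := fun _ => M) (hσ.soEquiv h)).symm
  have hΨ : Ψ '' hCompSet 𝓔 M = hCompSet 𝓔 M := by
    rw [hCompSet, Ψ.image_closure, ← range_comp]
    congr 1
    exact σ.surjective.range_comp (deltaMap 𝓔 M)
  Ψ.subtype fun p => by rw [← Ψ.injective.mem_set_image, hΨ]

theorem higsonHomeomorph_deltaEmb (h : IsCoarseStructure 𝓔) (hσ : IsCloseToId 𝓔 σ) (x : X) :
    hσ.higsonHomeomorph h (deltaEmb 𝓔 M x) = deltaEmb 𝓔 M (σ x) :=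
  rfl

theorem higsonHomeomorph_apply_of_notMem_range (h : IsCoarseStructure 𝓔)
    (hfin : IsFinitaryCoarse 𝓔) (hσ : IsCloseToId 𝓔 σ) {p : HComp 𝓔 M}
    (hp : p ∉ range (deltaEmb 𝓔 M)) : hσ.higsonHomeomorph h p = p := by
  refine Subtype.ext (funext fun f => ?_)
  show p.1 (hσ.soEquiv h f) = p.1 f
  let g : (soSet 𝓔 M → M) → ℝ := fun q => dist (q (hσ.soEquiv h f)) (q f)
  have hg : Continuous g := (continuous_apply _).dist (continuous_apply _)
  have hlim : Tendsto (g ∘ deltaMap 𝓔 M) cofinite (𝓝 0) := hσ.tendsto_dist_cofinite h hfin f.2.2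
  have hclus := (clusterPt_deltaMap_cofinite hp).map hg.continuousAt (tendsto_map'_iff.2 hlim)
  by_contra hne
  exact clusterPt_iff_not_disjoint.1 hclus (disjoint_nhds_nhds.2 (dist_ne_zero.2 hne))

theorem permCongr_mem_homeoPerms [Nontrivial M] (h : IsCoarseStructure 𝓔)
    (hfin : IsFinitaryCoarse 𝓔) (hσ : IsCloseToId 𝓔 σ) :
    (isolatedPointsEquiv M h hfin).permCongr σ ∈ homeoPerms (HComp 𝓔 M) := by
  refine ⟨hσ.higsonHomeomorph h, fun z hz => hσ.higsonHomeomorph_apply_of_notMem_range h hfin ?_,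
    fun x => ?_⟩
  · rwa [← isolatedPoints_hComp h hfin]
  · obtain ⟨y, rfl⟩ := (isolatedPointsEquiv M h hfin).surjective x
    simp [Equiv.permCongr_apply, higsonHomeomorph_deltaEmb]

end IsCloseToId

end Higson

section Oscillation

variable {K : Type*} [TopologicalSpace K] {M : Type*} [MetricSpace M]

theorem oscAt_eq_zero_iff {φ : isolatedPoints K → M} {z : K} :
    oscAt φ z = 0 ↔ ∀ ε > 0, ∃ O : Set K, IsOpen O ∧ z ∈ O ∧
      ∀ x y : isolatedPoints K, x.1 ∈ O → y.1 ∈ O → dist (φ x) (φ y) ≤ ε := by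
  constructor
  · intro h0 ε hε
    have hlt : oscAt φ z < ENNReal.ofReal ε := h0 ▸ ENNReal.ofReal_pos.2 hε
    simp only [oscAt, iInf_lt_iff] at hlt
    obtain ⟨O, hO, hzO, hdiam⟩ := hlt
    exact ⟨O, hO, hzO, fun x y hx hy => (ediam_image_le_ofReal_iff hε.le).1 hdiam.le x hx y hy⟩
  · intro hsmall
    refine le_antisymm (ENNReal.le_of_forall_pos_le_add fun ε hε _ => ?_) bot_le
    obtain ⟨O, hO, hzO, hO_small⟩ := hsmall ε hε
    calc oscAt φ z ≤ Metric.ediam (φ '' (Subtype.val ⁻¹' O)) :=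
          (iInf₂_le O hO).trans (iInf_le _ hzO)
      _ ≤ ENNReal.ofReal ε := (ediam_image_le_ofReal_iff ε.2).2 fun x hx y hy => hO_small x y hx hy
      _ = 0 + ε := by simp

theorem oscAt_eq_zero_of_continuous {F : K → M} (hF : Continuous F) {φ : isolatedPoints K → M}
    (hφ : ∀ x, φ x = F x.1) (z : K) : oscAt φ z = 0 := by
  refine oscAt_eq_zero_iff.2 fun ε hε => ⟨F ⁻¹' Metric.ball (F z) (ε / 2),
    Metric.isOpen_ball.preimage hF, Metric.mem_ball_self (half_pos hε), fun x y hx hy => ?_⟩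
  rw [hφ, hφ]
  linarith [dist_triangle_right (F x) (F y) (F z), Metric.mem_ball.1 hx, Metric.mem_ball.1 hy]

end Oscillation

theorem exists_injective_pairs_of_forall_finset {X : Type*} {R : X → X → Prop}
    (hfresh : ∀ s : Finset X, ∃ a b, a ∉ s ∧ b ∉ s ∧ a ≠ b ∧ R a b) :
    ∃ e : ℕ × Bool → X, Function.Injective e ∧ ∀ n, R (e (n, false)) (e (n, true)) := by
  classical
  obtain ⟨p, hp, hdisj⟩ := exists_seq_of_forall_finset_exists
    (fun q : X × X => q.1 ≠ q.2 ∧ R q.1 q.2)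
    (fun q q' => q'.1 ∉ ({q.1, q.2} : Set X) ∧ q'.2 ∉ ({q.1, q.2} : Set X)) fun s _ => by
      obtain ⟨a, b, ha, hb, hab, hRab⟩ := hfresh (s.image Prod.fst ∪ s.image Prod.snd)
      refine ⟨(a, b), ⟨hab, hRab⟩, fun q hq => ?_⟩
      simp only [Finset.mem_union, Finset.mem_image, not_or, not_exists, not_and] at ha hb
      simp only [mem_insert_iff, mem_singleton_iff, not_or]
      exact ⟨⟨fun h => ha.1 q hq h.symm, fun h => ha.2 q hq h.symm⟩,
        ⟨fun h => hb.1 q hq h.symm, fun h => hb.2 q hq h.symm⟩⟩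
  let e : ℕ × Bool → X := fun nb => bif nb.2 then (p nb.1).2 else (p nb.1).1
  have hmem : ∀ n b, e (n, b) ∈ ({(p n).1, (p n).2} : Set X) := fun n b => by
    cases b
    exacts [Or.inl rfl, Or.inr rfl]
  have hnew : ∀ m n c, m < n → e (n, c) ∉ ({(p m).1, (p m).2} : Set X) := fun m n c hmn => by
    cases c
    exacts [(hdisj m n hmn).1, (hdisj m n hmn).2]
  refine ⟨e, ?_, fun n => (hp n).2⟩
  rintro ⟨m, b⟩ ⟨n, c⟩ hmn
  rcases lt_trichotomy m n with hlt | rfl | hgt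
  · exact absurd (hmn ▸ hmem m b) (hnew m n c hlt)
  · cases b <;> cases c
    exacts [rfl, absurd hmn (hp m).1, absurd hmn.symm (hp m).1, rfl]
  · exact absurd (hmn.symm ▸ hmem n c) (hnew n m b hgt)

/-- Swapping infinitely many disjoint `R`-related pairs. -/
theorem exists_perm_infinite_of_forall_finset {X : Type*} {R : X → X → Prop}
    (hR : ∀ a b, R a b → R b a) (hfresh : ∀ s : Finset X, ∃ a b, a ∉ s ∧ b ∉ s ∧ a ≠ b ∧ R a b) :
    ∃ σ : Equiv.Perm X, (∀ x, σ x = x ∨ R x (σ x)) ∧ {x | R x (σ x)}.Infinite := by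
  classical
  obtain ⟨e, he, hRe⟩ := exists_injective_pairs_of_forall_finset hfresh
  let σ : Equiv.Perm X := Equiv.Perm.extendDomain
    (Equiv.prodCongr (Equiv.refl ℕ) Equiv.boolNot) (Equiv.ofInjective e he)
  have hσe : ∀ n b, σ (e (n, b)) = e (n, !b) := fun n b =>
    Equiv.Perm.extendDomain_apply_image _ (Equiv.ofInjective e he) (n, b)
  have hRσ : ∀ n b, R (e (n, b)) (σ (e (n, b))) := fun n b => by
    rw [hσe]
    cases b
    exacts [hRe n, hR _ _ (hRe n)]
  refine ⟨σ, fun x => ?_, ?_⟩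
  · by_cases hx : x ∈ range e
    · obtain ⟨⟨n, b⟩, rfl⟩ := hx
      exact Or.inr (hRσ n b)
    · exact Or.inl (Equiv.Perm.extendDomain_apply_not_subtype _ _ hx)
  · exact Set.infinite_of_injective_forall_mem
      (he.comp (f := fun n : ℕ => (n, false)) fun m n hmn => congrArg Prod.fst hmn)
      fun n => hRσ n false

section SoftHigson

variable {X : Type*} {𝓔 : Set (Set (X × X))} {M : Type*} [MetricSpace M]

theorem IsCoarseStructure.exists_pair_of_infinite (h : IsCoarseStructure 𝓔)
    (hfin : IsFinitaryCoarse 𝓔) {E : Set (X × X)} (hE : E ∈ 𝓔) {P : X → X → Prop}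
    (hS : {x | ∃ y ∈ entBall E x, ∃ y' ∈ entBall E x, P y y'}.Infinite) (s : Finset X) :
    ∃ y y', y ∉ s ∧ y' ∉ s ∧ (y, y') ∈ entComp (entInv E) E ∧ P y y' := by
  have hnear : (⋃ y ∈ s, entBall (entInv E) y).Finite :=
    s.finite_toSet.biUnion fun y _ => hfin.finite_entBall (h.inv_mem hE) y
  obtain ⟨x, ⟨y, hy, y', hy', hP⟩, hx⟩ := (hS.sdiff hnear).nonempty
  have hfar : ∀ w ∈ entBall E x, w ∉ s := fun w hw hws => hx (mem_biUnion (x := w) hws hw)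
  exact ⟨y, y', hfar y hy, hfar y' hy', ⟨x, hy, hy'⟩, hP⟩

theorem isMSoft_hComp [Nontrivial M] (h : IsCoarseStructure 𝓔) (hfin : IsFinitaryCoarse 𝓔) :
    IsMSoft (HComp 𝓔 M) M := by
  rintro φ hφ ⟨z, hz⟩
  have : Nonempty X :=
    let ⟨_, _, x, _⟩ := mem_closure_iff.1 z.2 univ isOpen_univ (mem_univ _); ⟨x⟩
  set ι := isolatedPointsEquiv M h hfin
  have hψ : ¬ SlowlyOscillating 𝓔 (φ ∘ ι) := fun hso => hz.ne' <|
    oscAt_eq_zero_of_continuous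
      (F := fun p : HComp 𝓔 M => p.1 ⟨φ ∘ ι, hφ.subset (range_comp_subset_range _ _), hso⟩)
      ((continuous_apply _).comp continuous_subtype_val)
      (fun x => by obtain ⟨y, rfl⟩ := ι.surjective x; rfl) z
  obtain ⟨ε, hε, E, hE, hS⟩ : ∃ ε > 0, ∃ E ∈ 𝓔, ∃ᶠ x in cofinite,
      ∃ y ∈ entBall E x, ∃ y' ∈ entBall E x, ε < dist (φ (ι y)) (φ (ι y')) := by
    by_contra! hcon
    exact hψ (slowlyOscillating_of_eventually_cofinite h hcon)
  let R : X → X → Prop := fun a b => (a, b) ∈ entComp (entInv E) E ∧ ε < dist (φ (ι a)) (φ (ι b))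
  have hR : ∀ a b, R a b → R b a := fun a b ⟨⟨x, hxa, hxb⟩, hd⟩ =>
    ⟨⟨x, hxb, hxa⟩, by rwa [dist_comm]⟩
  obtain ⟨σ, hσ, hinf⟩ := exists_perm_infinite_of_forall_finset hR fun s => by
    obtain ⟨a, b, ha, hb, hab, hd⟩ :=
      h.exists_pair_of_infinite hfin hE (frequently_cofinite_iff_infinite.1 hS) s
    exact ⟨a, b, ha, hb, fun hab' => by simp [hab'] at hd; linarith, hab, hd⟩
  have hclose : IsCloseToId 𝓔 σ := by
    refine ⟨_, h.comp_mem (h.inv_mem hE) hE, fun x => (hσ x).elim (fun hx => ?_) And.left⟩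
    rw [hx]
    exact ⟨x, h.ent E hE x, h.ent E hE x⟩
  refine ⟨ι.permCongr σ, hclose.permCongr_mem_homeoPerms h hfin, ε, hε,
    (hinf.image ι.injective.injOn).mono ?_⟩
  rintro _ ⟨x, hx, rfl⟩
  simpa [Equiv.permCongr_apply, dist_comm] using hx.2.le

end SoftHigson

section Transfer

variable {K L : Type*} [TopologicalSpace K] [TopologicalSpace L] {M : Type*} [MetricSpace M]

theorem Homeomorph.apply_mem_isolatedPoints_iff (e : K ≃ₜ L) {x : K} :
    e x ∈ isolatedPoints L ↔ x ∈ isolatedPoints K := by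
  show IsOpen {e x} ↔ IsOpen {x}
  rw [← e.isOpen_image, image_singleton]

def isolatedPointsCongr (e : K ≃ₜ L) : isolatedPoints K ≃ isolatedPoints L :=
  e.toEquiv.subtypeEquiv fun _ => e.apply_mem_isolatedPoints_iff.symm

@[simp]
theorem coe_isolatedPointsCongr (e : K ≃ₜ L) (x : isolatedPoints K) :
    (isolatedPointsCongr e x : L) = e x :=
  rfl

@[simp]
theorem coe_isolatedPointsCongr_symm (e : K ≃ₜ L) (y : isolatedPoints L) :
    ((isolatedPointsCongr e).symm y : K) = e.symm y :=
  rfl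

theorem IsMSoft.of_homeomorph (e : K ≃ₜ L) (hL : IsMSoft L M) : IsMSoft K M := by
  set ι := isolatedPointsCongr e with hι
  rintro φ hφ ⟨z, hz⟩
  have hosc : 0 < oscAt (φ ∘ ι.symm) (e z) := by
    refine pos_iff_ne_zero.2 fun h0 => hz.ne' (oscAt_eq_zero_iff.2 fun ε hε => ?_)
    obtain ⟨O, hO, hzO, hsmall⟩ := oscAt_eq_zero_iff.1 h0 ε hε
    exact ⟨e ⁻¹' O, hO.preimage e.continuous, hzO,
      fun x y hx hy => by simpa [hι] using hsmall (ι x) (ι y) hx hy⟩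
  obtain ⟨σ, ⟨g, hg_fix, hg_val⟩, ε, hε, hinf⟩ :=
    hL (φ ∘ ι.symm) (hφ.subset (range_comp_subset_range _ _)) ⟨e z, hosc⟩
  refine ⟨ι.symm.permCongr σ, ⟨(e.trans g).trans e.symm, fun w hw => ?_, fun x => ?_⟩, ε, hε,
    (hinf.image ι.symm.injective.injOn).mono ?_⟩
  · simp [hg_fix _ (mt e.apply_mem_isolatedPoints_iff.1 hw)]
  · simpa [hι, Equiv.permCongr_apply] using congrArg e.symm (hg_val (ι x))
  · rintro _ ⟨y, hy, rfl⟩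
    simpa [Equiv.permCongr_apply] using hy

end Transfer

section PermCoarse

variable {Y : Type*}

theorem mem_permEnt_coe_iff [DecidableEq (Equiv.Perm Y)] {F : Finset (Equiv.Perm Y)} {p : Y × Y} :
    p ∈ permEnt (F : Set (Equiv.Perm Y)) ↔ ∃ g ∈ insert 1 F, p.2 = g p.1 := by
  simp [permEnt]

theorem permCoarse_isCoarseStructure (G : Subgroup (Equiv.Perm Y))
    (htrans : ∀ x y, ∃ g ∈ G, g x = y) :
    IsCoarseStructure (permCoarse (G : Set (Equiv.Perm Y))) := by
  classical
  have hins : ∀ {S : Finset (Equiv.Perm Y)}, (S : Set (Equiv.Perm Y)) ⊆ G →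
      ∀ g ∈ insert 1 S, g ∈ G :=
    fun hSG => Finset.forall_mem_insert _ _ _ |>.2 ⟨G.one_mem, fun _ hg => hSG hg⟩
  refine ⟨fun E hE => hE.1, fun p => ?_, ?_,
    fun E F hE hEF ⟨_, S, hSG, hFS⟩ => ⟨hE, S, hSG, hEF.trans hFS⟩⟩
  · obtain ⟨g, hg, hgp⟩ := htrans p.1 p.2
    exact ⟨permEnt ↑({g} : Finset _), ⟨fun _ => Or.inl rfl, {g}, by simpa using hg, subset_rfl⟩,
      Or.inr ⟨g, by simp, hgp.symm⟩⟩
  · rintro E ⟨-, S, hSG, hES⟩ F ⟨-, T, hTG, hFT⟩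
    refine ⟨permEnt ↑((insert 1 T)⁻¹ * insert 1 S), ⟨fun _ => Or.inl rfl, _, fun g hg => ?_,
      subset_rfl⟩, ?_⟩
    · obtain ⟨_, hu, s, hs, rfl⟩ := Finset.mem_mul.1 hg
      obtain ⟨t, ht, rfl⟩ := Finset.mem_inv.1 hu
      exact G.mul_mem (G.inv_mem (hins hTG t ht)) (hins hSG s hs)
    · rintro ⟨x, z⟩ ⟨y, hxy, hzy⟩
      obtain ⟨s, hs, rfl : y = s x⟩ := mem_permEnt_coe_iff.1 (hES hxy)
      obtain ⟨t, ht, hst : s x = t z⟩ := mem_permEnt_coe_iff.1 (hFT hzy)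
      refine Or.inr ⟨t⁻¹ * s, Finset.mul_mem_mul (Finset.inv_mem_inv ht) hs, ?_⟩
      simp [hst]

theorem permCoarse_finitary (S : Set (Equiv.Perm Y)) : IsFinitaryCoarse (permCoarse S) := by
  classical
  rintro E ⟨-, F, -, hEF⟩
  refine ⟨(insert 1 F).card, fun x => ?_⟩
  have hball : entBall E x ⊆ ((insert 1 F).image fun g => g x : Finset Y) := fun y hy => by
    obtain ⟨g, hg, rfl : y = g x⟩ := mem_permEnt_coe_iff.1 (hEF hy)
    exact Finset.mem_coe.2 (Finset.mem_image_of_mem _ hg)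
  refine ⟨(Finset.finite_toSet _).subset hball, (Set.ncard_le_ncard hball).trans ?_⟩
  rw [Set.ncard_coe_finset]
  exact Finset.card_image_le

end PermCoarse

section HomeoPerms

variable {K : Type*} [TopologicalSpace K]

variable (K) in
def homeoPermsSubgroup : Subgroup (Equiv.Perm (isolatedPoints K)) where
  carrier := homeoPerms K
  one_mem' := ⟨Homeomorph.refl K, fun _ _ => rfl, fun _ => rfl⟩
  mul_mem' := by
    rintro σ τ ⟨g, hg_fix, hg_val⟩ ⟨g', hg'_fix, hg'_val⟩
    exact ⟨g'.trans g, fun z hz => by simp [hg_fix z hz, hg'_fix z hz],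
      fun x => by simp [hg'_val, hg_val]⟩
  inv_mem' := by
    rintro σ ⟨g, hg_fix, hg_val⟩
    refine ⟨g.symm, fun z hz => g.symm_apply_eq.2 (hg_fix z hz).symm,
      fun x => g.symm_apply_eq.2 ?_⟩
    simp [hg_val]

theorem swap_mem_homeoPerms [T1Space K] [DecidableEq K] (a b : isolatedPoints K) :
    Equiv.swap a b ∈ homeoPerms K := by
  have hclopen : ∀ c : isolatedPoints K, frontier ({c.1} : Set K) = ∅ := fun c =>
    IsClopen.frontier_eq ⟨isClosed_singleton, c.2⟩
  have hcont : Continuous (Equiv.swap a.1 b.1) := by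
    rw [show ⇑(Equiv.swap a.1 b.1) = _ from funext (Equiv.swap_apply_def a.1 b.1)]
    exact continuous_const.if (by simp [hclopen])
      (continuous_const.if (by simp [hclopen]) continuous_id)
  refine ⟨⟨Equiv.swap a.1 b.1, hcont, hcont⟩, fun z hz => ?_, fun x => ?_⟩
  · exact Equiv.swap_apply_of_ne_of_ne (fun h => hz (h ▸ a.2)) (fun h => hz (h ▸ b.2))
  · show Equiv.swap a.1 b.1 x.1 = (Equiv.swap a b x).1
    rw [Equiv.swap_apply_def, Equiv.swap_apply_def]
    split_ifs <;> simp_all [Subtype.ext_iff]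

theorem permCoarse_homeoPerms_isCoarseStructure [T1Space K] :
    IsCoarseStructure (permCoarse (homeoPerms K)) := by
  classical
  exact permCoarse_isCoarseStructure (homeoPermsSubgroup K) fun x y =>
    ⟨Equiv.swap x y, swap_mem_homeoPerms x y, Equiv.swap_apply_left x y⟩

end HomeoPerms

section Extension

variable {K : Type*} [TopologicalSpace K] {M : Type*} [MetricSpace M]

theorem exists_mem_closure_notMem_isolatedPoints [CompactSpace K] {s : Set K} (hs : s.Infinite) :
    ∃ z ∈ closure s, z ∉ isolatedPoints K := by
  obtain ⟨z, -, hz⟩ := hs.exists_accPt_of_subset_isCompact isCompact_univ (subset_univ s)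
  refine ⟨z, mem_closure_iff_clusterPt.2 hz.clusterPt, fun hiso => ?_⟩
  rw [AccPt, (isOpen_singleton_iff_punctured_nhds z).1 hiso, bot_inf_eq] at hz
  exact hz.ne rfl

theorem finite_setOf_le_dist [CompactSpace K] {f : K → M} (hf : Continuous f)
    {σ : Equiv.Perm (isolatedPoints K)} (hσ : σ ∈ homeoPerms K) {ε : ℝ} (hε : 0 < ε) :
    {x : isolatedPoints K | ε ≤ dist (f (σ x)) (f x)}.Finite := by
  obtain ⟨g, hg_fix, hg_val⟩ := hσ
  have hC : IsClosed {v | ε ≤ dist (f (g v)) (f v)} :=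
    isClosed_le continuous_const ((hf.comp g.continuous).dist hf)
  refine Set.not_infinite.1 fun hinf => ?_
  obtain ⟨z, hz, hz_iso⟩ :=
    exists_mem_closure_notMem_isolatedPoints (hinf.image Subtype.val_injective.injOn)
  have hzC := hC.closure_subset_iff.2 (by rintro _ ⟨x, hx, rfl⟩; simpa [hg_val] using hx) hz
  simp only [mem_ofPred_eq, hg_fix z hz_iso, dist_self] at hzC
  linarith

theorem comp_val_mem_soSet [CompactSpace K] [T1Space K] [Nonempty (isolatedPoints K)]
    {f : K → M} (hf : Continuous f) : f ∘ Subtype.val ∈ soSet (permCoarse (homeoPerms K)) M := by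
  classical
  refine ⟨(isCompact_range hf).isBounded.subset (range_comp_subset_range _ _),
    slowlyOscillating_of_eventually_cofinite permCoarse_homeoPerms_isCoarseStructure
      fun ε hε E hE => ?_⟩
  obtain ⟨-, F, hFG, hEF⟩ := hE
  have hnear : ∀ᶠ x in cofinite, ∀ g ∈ insert 1 F, dist (f (g x)) (f x) < ε / 2 := by
    refine (eventually_all_finset _).2 fun g hg => eventually_cofinite.2 ?_
    refine (finite_setOf_le_dist hf ?_ (half_pos hε)).subset fun x hx => not_lt.1 hx
    exact (Finset.mem_insert.1 hg).elim (· ▸ (homeoPermsSubgroup K).one_mem) fun hgF => hFG hgF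
  filter_upwards [hnear] with x hx y hy y' hy'
  obtain ⟨g, hg, rfl : y = g x⟩ := mem_permEnt_coe_iff.1 (hEF hy)
  obtain ⟨g', hg', rfl : y' = g' x⟩ := mem_permEnt_coe_iff.1 (hEF hy')
  show dist (f (g x)) (f (g' x)) ≤ ε
  linarith [dist_triangle_right (f (g x)) (f (g' x)) (f x), hx g hg, hx g' hg']

theorem IsMSoft.oscAt_eq_zero [T1Space K] (hM : IsMSoft K M) {ψ : isolatedPoints K → M}
    (hψ : ψ ∈ soSet (permCoarse (homeoPerms K)) M) (z : K) : oscAt ψ z = 0 := by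
  classical
  by_contra hz
  obtain ⟨σ, hσ, ε, hε, hinf⟩ := hM ψ hψ.1 ⟨z, pos_iff_ne_zero.2 hz⟩
  have hclose : IsCloseToId (permCoarse (homeoPerms K)) σ :=
    ⟨permEnt ↑({σ} : Finset _), ⟨fun _ => Or.inl rfl, {σ}, by simpa using hσ, subset_rfl⟩,
      fun x => Or.inr ⟨σ, by simp, rfl⟩⟩
  have hnear := (hclose.tendsto_dist_cofinite permCoarse_homeoPerms_isCoarseStructure
    (permCoarse_finitary _) hψ.2).eventually (gt_mem_nhds hε)
  exact hinf ((eventually_cofinite.1 hnear).subset fun x hx => not_lt.2 hx)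

instance : DiscreteTopology (isolatedPoints K) := by
  refine discreteTopology_iff_isOpen_singleton.2 fun a => ?_
  have : IsOpen (Subtype.val ⁻¹' {a.1} : Set (isolatedPoints K)) :=
    a.2.preimage continuous_subtype_val
  rwa [← image_singleton, Subtype.val_injective.preimage_image] at this

theorem isDenseInducing_val_isolatedPoints (hdense : Dense (isolatedPoints K)) :
    IsDenseInducing (Subtype.val : isolatedPoints K → K) :=
  ⟨IsInducing.subtypeVal, hdense.denseRange_val⟩

theorem continuous_extend_of_oscAt_eq_zero [CompleteSpace M] (hdense : Dense (isolatedPoints K))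
    {φ : isolatedPoints K → M} (hosc : ∀ z, oscAt φ z = 0) :
    Continuous ((isDenseInducing_val_isolatedPoints hdense).extend φ) := by
  refine (isDenseInducing_val_isolatedPoints hdense).continuous_extend fun z => ?_
  have : (comap Subtype.val (𝓝 z)).NeBot := mem_closure_iff_comap_neBot.1 (hdense z)
  refine CompleteSpace.complete (Metric.cauchy_iff.2 ⟨map_neBot, fun ε hε => ?_⟩)
  obtain ⟨O, hO, hzO, hsmall⟩ := oscAt_eq_zero_iff.1 (hosc z) (ε / 2) (half_pos hε)
  refine ⟨φ '' (Subtype.val ⁻¹' O), image_mem_map (preimage_mem_comap (hO.mem_nhds hzO)), ?_⟩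
  rintro _ ⟨x, hx, rfl⟩ _ ⟨y, hy, rfl⟩
  exact (hsmall x y hx hy).trans_lt (half_lt_self hε)

end Extension

theorem nonempty_homeomorph_hComp_of_isMSoft {K : Type*} [TopologicalSpace K] [CompactSpace K]
    [T2Space K] (hdense : Dense (isolatedPoints K)) (hM : IsMSoft K ℝ) :
    Nonempty (K ≃ₜ HComp (permCoarse (homeoPerms K)) ℝ) := by
  set 𝓔 := permCoarse (homeoPerms K)
  set di := isDenseInducing_val_isolatedPoints hdense
  let Φ : K → (soSet 𝓔 ℝ → ℝ) := fun z f => di.extend f.1 z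
  have hΦ : Continuous Φ :=
    continuous_pi fun f => continuous_extend_of_oscAt_eq_zero hdense (hM.oscAt_eq_zero f.2)
  have hΦδ : Φ ∘ Subtype.val = deltaMap 𝓔 ℝ :=
    funext fun x => funext fun f => di.extend_eq continuous_of_discreteTopology x
  have hinj : Function.Injective Φ := by
    intro z₁ z₂ h12
    by_contra hne
    have : Nonempty K := ⟨z₁⟩
    have : Nonempty (isolatedPoints K) := hdense.nonempty.to_subtype
    obtain ⟨u, hu₁, hu₂, -⟩ := exists_continuous_zero_one_of_isClosed isClosed_singleton
      isClosed_singleton (disjoint_singleton.2 hne)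
    have hext : di.extend (u ∘ Subtype.val) = u := di.extend_unique (fun _ => rfl) u.continuous
    have := congrFun h12 ⟨_, comp_val_mem_soSet u.continuous⟩
    simp [Φ, hext, hu₁ rfl, hu₂ rfl] at this
  have hrange : range Φ = hCompSet 𝓔 ℝ := by
    rw [hCompSet, ← hΦδ, range_comp, Subtype.range_coe,
      hΦ.isClosedMap.closure_image_eq_of_continuous hΦ, hdense.closure_eq, image_univ]
  exact ⟨(hΦ.isClosedEmbedding hinj).isEmbedding.toHomeomorph.trans (Homeomorph.setCongr hrange)⟩

/-- A compactification `K` is homeomorphic to the Higson compactification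
of some finitary coarse space iff `K` is `ℝ`-soft. -/
theorem statement6 (K : Type u) [TopologicalSpace K] (hK : IsCompactification K) :
    (∃ (X : Type u) (𝓔 : Set (Set (X × X))), IsCoarseStructure 𝓔 ∧ IsFinitaryCoarse 𝓔 ∧
      Nonempty (K ≃ₜ HComp 𝓔 ℝ)) ↔ IsMSoft K ℝ := by
  constructor
  · rintro ⟨X, 𝓔, h, hfin, ⟨e⟩⟩
    exact (isMSoft_hComp h hfin).of_homeomorph e
  · intro hM
    obtain ⟨_, _, hdense⟩ := hK
    exact ⟨_, _, permCoarse_homeoPerms_isCoarseStructure, permCoarse_finitary _,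
      nonempty_homeomorph_hComp_of_isMSoft hdense hM⟩
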